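/- Let ℏ₀ > 0, s > 0, let c = (c_k)_{k∈ℤ} be a finitely supported sequence of complex numbers, and let f' : ℝ/2πℤ → ℂ be integrable. Then the function (x,y) ↦ conj(Φ_s[c](x,y)) · f'(x) · e^{−sy²/(2ℏ₀)} is integrable on (ℝ/2πℤ) × ℝ with respect to (dx/2π)·dy, and √(s/2) · ∫_ℝ ∫_0^{2π} conj(Φ_s[c](x,y)) · f'(x) · e^{−sy²/(2ℏ₀)} (dx/2π) dy = √(πℏ₀) · Σ_{k∈ℤ} conj(c_k) · ((1/2π)∫_0^{2π} f'(x) e^{−ikx} dx). (This is the BKS pairing (33) between a Kähler polarized section and a vertically polarized section, and Hall's formula (35) ⟨σ_s, σ'_0⟩^{BKS} = a_{s/2}⟨f,f'⟩, in the abelian case K = U(1); with the rescaled inner product (36) on vertically polarized sections it gives the unitarity of B^Q_{s0}.) -/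

import Mathlib

/-!
For finitely supported `c`, `Φ_s[c]` is a finite sum of separated modes `e^{ikx} e^{-ksy}`, so the
integrand is a finite sum of products of an `x`-factor, integrable over a period, and a `y`-factor,
which is a shifted Gaussian. Integrating the `k`-th mode over `y` gives
`∫ e^{-sy²/(2ℏ₀) - ksy} dy = √(2πℏ₀/s) e^{sℏ₀k²/2}`, whose shift factor exactly cancels the damping
`e^{-sℏ₀k²/2}` of the mode; what remains is `√(πℏ₀)/√(s/2)` times the `k`-th Fourier coefficient
of `f'`.
-/

open scoped Real BigOperators
open MeasureTheory

/-- The `J_s`-holomorphic function `(C_{sℏ₀}f) ∘ ψ_s` on `T*U(1) ≅ (ℝ/2πℤ) × ℝ`,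
where `f ∈ L²(S¹)` has Fourier coefficients `c_k`:
`Φ_s[c](x,y) = Σ_{k∈ℤ} c_k e^{−sℏ₀k²/2} e^{ikx} e^{−ksy}`. -/
noncomputable def Phi (ℏ₀ s : ℝ) (c : ℤ → ℂ) (x y : ℝ) : ℂ :=
  ∑' k : ℤ, c k * Complex.exp (-((s : ℂ) * (ℏ₀ : ℂ) * (k : ℂ) ^ 2) / 2) *
    Complex.exp ((k : ℂ) * Complex.I * (x : ℂ)) * Complex.exp (-((k : ℂ) * (s : ℂ) * (y : ℂ)))

open Complex ComplexConjugate

theorem integrable_cexp_neg_mul_sq_add_mul {a : ℝ} (ha : 0 < a) (b : ℂ) :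
    Integrable (fun y : ℝ => cexp (-(a : ℂ) * y ^ 2 + b * y)) := by
  simpa using integrable_cexp_quadratic' (b := -(a : ℂ)) (by simpa using ha) b 0

theorem integral_cexp_neg_mul_sq_add_mul {a : ℝ} (ha : 0 < a) (b : ℂ) :
    ∫ y : ℝ, cexp (-(a : ℂ) * y ^ 2 + b * y) = (√(π / a) : ℂ) * cexp (b ^ 2 / (4 * a)) := by
  have hre : (-(a : ℂ)).re < 0 := by simpa using ha
  simpa [Real.sqrt_eq_rpow, ofReal_cpow (div_pos Real.pi_pos ha).le, neg_div, div_neg]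
    using integral_cexp_quadratic hre b 0

section ProductSums

variable {α β ι 𝕜 : Type*} [MeasurableSpace α] [MeasurableSpace β]
  {μ : Measure α} {ν : Measure β} (F : Finset ι) {g : ι → α → 𝕜} {h : ι → β → 𝕜}

theorem integrable_finsetSum_mul_prod [NormedRing 𝕜] (hg : ∀ i ∈ F, Integrable (g i) μ)
    (hh : ∀ i ∈ F, Integrable (h i) ν) :
    Integrable (fun p : α × β => ∑ i ∈ F, g i p.1 * h i p.2) (μ.prod ν) :=
  integrable_finsetSum F fun i hi => (hg i hi).mul_prod (hh i hi)

theorem integral_integral_finsetSum_mul [RCLike 𝕜] (hg : ∀ i ∈ F, Integrable (g i) μ)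
    (hh : ∀ i ∈ F, Integrable (h i) ν) :
    ∫ y, ∫ x, ∑ i ∈ F, g i x * h i y ∂μ ∂ν = ∑ i ∈ F, (∫ x, g i x ∂μ) * ∫ y, h i y ∂ν := by
  have hinner (y : β) : ∫ x, ∑ i ∈ F, g i x * h i y ∂μ = ∑ i ∈ F, (∫ x, g i x ∂μ) * h i y := by
    rw [integral_finsetSum F fun i hi => (hg i hi).mul_const _]
    simp_rw [integral_mul_const]
  simp_rw [hinner]
  rw [integral_finsetSum F fun i hi => (hh i hi).const_mul _]
  simp_rw [integral_const_mul]

end ProductSums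

theorem Phi_eq_sum {ℏ₀ s : ℝ} {c : ℤ → ℂ} {F : Finset ℤ} (hF : Function.support c ⊆ F) (x y : ℝ) :
    Phi ℏ₀ s c x y = ∑ k ∈ F, c k * cexp (-((s : ℂ) * ℏ₀ * k ^ 2) / 2) *
      cexp (k * I * x) * cexp (-(k * s * y)) :=
  tsum_eq_sum fun k hk => by simp [Function.notMem_support.mp fun h => hk (hF h)]

theorem conj_Phi_mul_mul_exp {ℏ₀ s : ℝ} {c : ℤ → ℂ} {F : Finset ℤ}
    (hF : Function.support c ⊆ F) (f : ℝ → ℂ) (x y : ℝ) :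
    conj (Phi ℏ₀ s c x y) * f x * (Real.exp (-(s * y ^ 2) / (2 * ℏ₀)) : ℂ) =
      ∑ k ∈ F, (conj (c k) * cexp (-((s : ℂ) * ℏ₀ * k ^ 2) / 2) * (f x * cexp (-k * I * x))) *
        cexp (-((s / (2 * ℏ₀) : ℝ) : ℂ) * y ^ 2 + -(k * s : ℂ) * y) := by
  rw [Phi_eq_sum hF, map_sum, Finset.sum_mul, Finset.sum_mul]
  refine Finset.sum_congr rfl fun k _ => ?_
  simp only [map_mul, ← exp_conj, ofReal_exp, map_neg, map_div₀, conj_ofReal, conj_I,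
    map_intCast, map_pow, map_ofNat]
  rw [show -(k * s * y : ℂ) = -(k * s : ℂ) * y by ring, exp_add,
    show (k : ℂ) * -I * x = -k * I * x by ring,
    show ((-(s * y ^ 2) / (2 * ℏ₀) : ℝ) : ℂ) = -((s / (2 * ℏ₀) : ℝ) : ℂ) * y ^ 2 by push_cast; ring]
  ring

theorem integrable_mul_cexp_neg_int_mul_I {μ : Measure ℝ} {f : ℝ → ℂ} (hf : Integrable f μ)
    (k : ℤ) :
    Integrable (fun x => f x * cexp (-k * I * x)) μ := by
  refine hf.mul_bdd (c := 1) (by fun_prop) (ae_of_all _ fun x => ?_)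
  rw [show -(k : ℂ) * I * x = ((-k * x : ℝ) : ℂ) * I by push_cast; ring, norm_exp_ofReal_mul_I]

theorem sqrt_mul_exp_mul_integral_gaussian {ℏ₀ s : ℝ} (hℏ : 0 < ℏ₀) (hs : 0 < s) (k : ℤ) :
    (√(s / 2) : ℂ) * cexp (-((s : ℂ) * ℏ₀ * k ^ 2) / 2) *
      ∫ y : ℝ, cexp (-((s / (2 * ℏ₀) : ℝ) : ℂ) * y ^ 2 + -(k * s : ℂ) * y) = √(π * ℏ₀) := by
  have ha : 0 < s / (2 * ℏ₀) := by positivity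
  have hsqrt : (√(s / 2) : ℂ) * √(π / (s / (2 * ℏ₀))) = √(π * ℏ₀) := by
    rw [← ofReal_mul, ← Real.sqrt_mul (by positivity)]
    congr 1
    field_simp
  have hexp : cexp (-((s : ℂ) * ℏ₀ * k ^ 2) / 2) *
      cexp ((-(k * s : ℂ)) ^ 2 / (4 * (s / (2 * ℏ₀) : ℝ))) = 1 := by
    rw [← exp_add, ← exp_zero]
    congr 1
    push_cast
    field_simp
    ring
  rw [integral_cexp_neg_mul_sq_add_mul ha]
  linear_combination (√(π / (s / (2 * ℏ₀))) : ℂ) * (√(s / 2) : ℂ) * hexp + hsqrt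

theorem statement_5_general {ℏ₀ s : ℝ} (hℏ : 0 < ℏ₀) (hs : 0 < s)
    (c : ℤ → ℂ) (hc : (Function.support c).Finite)
    (f' : ℝ → ℂ)
    (hf' : IntegrableOn f' (Set.Ioc 0 (2 * π))) :
    Integrable
      (fun p : ℝ × ℝ =>
        (starRingEnd ℂ) (Phi ℏ₀ s c p.1 p.2) * f' p.1 *
          (Real.exp (-(s * p.2 ^ 2) / (2 * ℏ₀)) : ℂ))
      ((volume.restrict (Set.Ioc 0 (2 * π))).prod volume) ∧
    (Real.sqrt (s / 2) : ℂ) *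
        ∫ y : ℝ, (∫ x in Set.Ioc (0 : ℝ) (2 * π),
          (starRingEnd ℂ) (Phi ℏ₀ s c x y) * f' x *
            (Real.exp (-(s * y ^ 2) / (2 * ℏ₀)) : ℂ)) / (2 * (π : ℂ)) =
      (Real.sqrt (π * ℏ₀) : ℂ) *
        ∑' k : ℤ, (starRingEnd ℂ) (c k) *
          ((1 / (2 * (π : ℂ))) * ∫ x in Set.Ioc (0 : ℝ) (2 * π),
            f' x * Complex.exp (-(k : ℂ) * Complex.I * (x : ℂ))) := by
  have hF : Function.support c ⊆ hc.toFinset := by simp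
  have hx (k : ℤ) := (integrable_mul_cexp_neg_int_mul_I hf' k).const_mul
    (conj (c k) * cexp (-((s : ℂ) * ℏ₀ * k ^ 2) / 2))
  have ha : 0 < s / (2 * ℏ₀) := by positivity
  have hy (k : ℤ) := integrable_cexp_neg_mul_sq_add_mul ha (-(k * s))
  simp_rw [conj_Phi_mul_mul_exp hF f']
  -- `(e :)` elaborates `e` before unifying with the goal, avoiding a costly higher-order problem.
  refine ⟨(integrable_finsetSum_mul_prod hc.toFinset (fun k _ => hx k) (fun k _ => hy k) :), ?_⟩
  rw [integral_div, integral_integral_finsetSum_mul hc.toFinset (fun k _ => hx k) (fun k _ => hy k),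
    tsum_eq_sum (s := hc.toFinset) fun k hk => by simp [show c k = 0 by simpa using hk],
    Finset.mul_sum, Finset.sum_div, Finset.mul_sum]
  refine Finset.sum_congr rfl fun k _ => ?_
  rw [integral_const_mul]
  linear_combination (conj (c k) * (∫ x in Set.Ioc 0 (2 * π), f' x * cexp (-k * I * x)) / (2 * π)) *
    sqrt_mul_exp_mul_integral_gaussian hℏ hs k

/-- The BKS pairing (33) between a Kähler polarized section and a vertically polarized
section, and Hall's formula (35) `⟨σ_s, σ'_0⟩^{BKS} = a_{s/2} ⟨f, f'⟩`, in the abelian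
case `K = U(1)`. -/
theorem statement_5 {ℏ₀ s : ℝ} (hℏ : 0 < ℏ₀) (hs : 0 < s)
    (c : ℤ → ℂ) (hc : (Function.support c).Finite)
    (f' : ℝ → ℂ) (hper : Function.Periodic f' (2 * π))
    (hf' : IntegrableOn f' (Set.Ioc 0 (2 * π))) :
    Integrable
      (fun p : ℝ × ℝ =>
        (starRingEnd ℂ) (Phi ℏ₀ s c p.1 p.2) * f' p.1 *
          (Real.exp (-(s * p.2 ^ 2) / (2 * ℏ₀)) : ℂ))
      ((volume.restrict (Set.Ioc 0 (2 * π))).prod volume) ∧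
    (Real.sqrt (s / 2) : ℂ) *
        ∫ y : ℝ, (∫ x in Set.Ioc (0 : ℝ) (2 * π),
          (starRingEnd ℂ) (Phi ℏ₀ s c x y) * f' x *
            (Real.exp (-(s * y ^ 2) / (2 * ℏ₀)) : ℂ)) / (2 * (π : ℂ)) =
      (Real.sqrt (π * ℏ₀) : ℂ) *
        ∑' k : ℤ, (starRingEnd ℂ) (c k) *
          ((1 / (2 * (π : ℂ))) * ∫ x in Set.Ioc (0 : ℝ) (2 * π),
            f' x * Complex.exp (-(k : ℂ) * Complex.I * (x : ℂ))) :=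
  statement_5_general hℏ hs c hc f' hf'
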